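/- arXiv:1811.06725 — 4 statements merged into one kernel-verified Lean document; each statement's English description precedes it below -/
import Mathlib

section
/- Let K be a field of characteristic zero, let n ≥ 1, k ≥ 0, let a ∈ K[x][t]^n be a vector of polynomials and let B_0, …, B_k ∈ K[x][t]^{n×n} be matrices of polynomials. Then the functional equation f = a + t·Σ_{i=0}^{k} B_i·Δ^i f has exactly one solution f in K[x][[t]]^n; its t-coefficients are determined by the recursion [t^0]f = [t^0]a and [t^{N+1}]f = [t^{N+1}]a + Σ_{i=0}^{k} Σ_{j=0}^{N} ([t^j]B_i)·Δ^i([t^{N−j}]f) for all N ∈ ℕ. -/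
/-!
Comparing `t`-coefficients, `[t^{N+1}]` of the right-hand side involves only `[t^j]f` with
`j ≤ N`, since `Δ` acts coefficientwise and the whole sum is multiplied by `t`. So the
equation is equivalent to the stated recursion, which has exactly one solution.
-/

/-- The operator `Δ` on `K[x][[t]]` defined by `Δf = (f − f(0,t))/x`,
acting on each `t`-coefficient (a polynomial in `x`) as `divX`. -/
noncomputable def seriesDelta {K : Type*} [CommRing K] (f : PowerSeries (Polynomial K)) :
    PowerSeries (Polynomial K) :=
  PowerSeries.mk fun N => (PowerSeries.coeff N f).divX

theorem coeff_seriesDelta_iterate {K : Type*} [CommRing K] (i N : ℕ)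
    (f : PowerSeries (Polynomial K)) :
    PowerSeries.coeff N (seriesDelta^[i] f) = Polynomial.divX^[i] (PowerSeries.coeff N f) := by
  induction i generalizing f with
  | zero => rfl
  | succ i ih =>
    rw [Function.iterate_succ_apply, ih, Function.iterate_succ_apply]
    simp only [seriesDelta, PowerSeries.coeff_mk]

namespace DeltaSystem

variable {K : Type*} [CommRing K] {n : ℕ} (k : ℕ) (a : Fin n → Polynomial (Polynomial K))
  (B : ℕ → Matrix (Fin n) (Fin n) (Polynomial (Polynomial K)))

noncomputable def rhs (f : Fin n → PowerSeries (Polynomial K)) (p : Fin n) :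
    PowerSeries (Polynomial K) :=
  (a p : PowerSeries (Polynomial K)) +
    PowerSeries.X * ∑ i ∈ Finset.range (k + 1), ∑ l,
      (B i p l : PowerSeries (Polynomial K)) * seriesDelta^[i] (f l)

noncomputable def solutionCoeff : ℕ → Fin n → Polynomial K
  | 0 => fun p => (a p).coeff 0
  | N + 1 => fun p => (a p).coeff (N + 1) + ∑ i ∈ Finset.range (k + 1),
      ∑ j ∈ Finset.range (N + 1), ∑ l,
        (B i p l).coeff j * Polynomial.divX^[i] (solutionCoeff (N - j) l)
  decreasing_by omega

noncomputable def solution (p : Fin n) : PowerSeries (Polynomial K) :=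
  PowerSeries.mk fun N => solutionCoeff k a B N p

theorem coeff_zero_rhs (f : Fin n → PowerSeries (Polynomial K)) (p : Fin n) :
    PowerSeries.coeff 0 (rhs k a B f p) = (a p).coeff 0 := by
  simp [rhs]

theorem coeff_succ_rhs (f : Fin n → PowerSeries (Polynomial K)) (p : Fin n) (N : ℕ) :
    PowerSeries.coeff (N + 1) (rhs k a B f p) = (a p).coeff (N + 1) +
      ∑ i ∈ Finset.range (k + 1), ∑ j ∈ Finset.range (N + 1), ∑ l,
        (B i p l).coeff j * Polynomial.divX^[i] (PowerSeries.coeff (N - j) (f l)) := by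
  rw [rhs, map_add, PowerSeries.coeff_succ_X_mul, Polynomial.coeff_coe, map_sum]
  congr 1
  refine Finset.sum_congr rfl fun i _ => ?_
  rw [map_sum, Finset.sum_comm]
  refine Finset.sum_congr rfl fun l _ => ?_
  rw [PowerSeries.coeff_mul, Finset.Nat.sum_antidiagonal_eq_sum_range_succ_mk]
  refine Finset.sum_congr rfl fun j _ => ?_
  rw [Polynomial.coeff_coe, coeff_seriesDelta_iterate]

theorem rhs_solution : rhs k a B (solution k a B) = solution k a B := by
  funext p
  refine PowerSeries.ext fun N => ?_
  cases N with
  | zero => rw [coeff_zero_rhs, solution, PowerSeries.coeff_mk, solutionCoeff]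
  | succ N =>
    rw [coeff_succ_rhs, solution, PowerSeries.coeff_mk, solutionCoeff]
    simp only [solution, PowerSeries.coeff_mk]

theorem eq_solution_of_rhs_eq {f : Fin n → PowerSeries (Polynomial K)}
    (hf : rhs k a B f = f) : f = solution k a B := by
  have hcoeff : ∀ N p, PowerSeries.coeff N (f p) = solutionCoeff k a B N p := by
    intro N
    induction N using Nat.strong_induction_on with
    | _ N ih =>
      intro p
      rw [← hf]
      cases N with
      | zero => rw [coeff_zero_rhs, solutionCoeff]
      | succ N =>
        rw [coeff_succ_rhs, solutionCoeff]
        congr 1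
        refine Finset.sum_congr rfl fun i _ => Finset.sum_congr rfl fun j _ =>
          Finset.sum_congr rfl fun l _ => ?_
        rw [ih (N - j) (by omega) l]
  funext p
  refine PowerSeries.ext fun N => ?_
  rw [hcoeff, solution, PowerSeries.coeff_mk]

end DeltaSystem

theorem unique_solution_of_linear_delta_system_general
    (K : Type*) [Field K] (n k : ℕ)
    (a : Fin n → Polynomial (Polynomial K))
    (B : ℕ → Matrix (Fin n) (Fin n) (Polynomial (Polynomial K))) :
    (∃! f : Fin n → PowerSeries (Polynomial K),
        ∀ p, f p = (a p : PowerSeries (Polynomial K)) +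
          PowerSeries.X * ∑ i ∈ Finset.range (k + 1), ∑ l,
            (B i p l : PowerSeries (Polynomial K)) * seriesDelta^[i] (f l)) ∧
    ∀ f : Fin n → PowerSeries (Polynomial K),
      (∀ p, f p = (a p : PowerSeries (Polynomial K)) +
          PowerSeries.X * ∑ i ∈ Finset.range (k + 1), ∑ l,
            (B i p l : PowerSeries (Polynomial K)) * seriesDelta^[i] (f l)) →
      (∀ p, PowerSeries.coeff 0 (f p) = (a p).coeff 0) ∧
      ∀ N : ℕ, ∀ p, PowerSeries.coeff (N + 1) (f p) = (a p).coeff (N + 1) +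
        ∑ i ∈ Finset.range (k + 1), ∑ j ∈ Finset.range (N + 1), ∑ l,
          (B i p l).coeff j * (Polynomial.divX)^[i] (PowerSeries.coeff (N - j) (f l)) := by
  refine ⟨⟨DeltaSystem.solution k a B, fun p => (congrFun (DeltaSystem.rhs_solution k a B) p).symm,
    fun g hg => DeltaSystem.eq_solution_of_rhs_eq k a B (funext fun p => (hg p).symm)⟩,
    fun f hf => ?_⟩
  have hfix : ∀ N p, PowerSeries.coeff N (f p) = PowerSeries.coeff N (DeltaSystem.rhs k a B f p) :=
    fun N p => congrArg _ (hf p)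
  exact ⟨fun p => (hfix 0 p).trans (DeltaSystem.coeff_zero_rhs k a B f p),
    fun N p => (hfix (N + 1) p).trans (DeltaSystem.coeff_succ_rhs k a B f p N)⟩

theorem unique_solution_of_linear_delta_system
    (K : Type*) [Field K] [CharZero K] (n k : ℕ) (hn : 1 ≤ n)
    (a : Fin n → Polynomial (Polynomial K))
    (B : ℕ → Matrix (Fin n) (Fin n) (Polynomial (Polynomial K))) :
    (∃! f : Fin n → PowerSeries (Polynomial K),
        ∀ p, f p = (a p : PowerSeries (Polynomial K)) +
          PowerSeries.X * ∑ i ∈ Finset.range (k + 1), ∑ l,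
            (B i p l : PowerSeries (Polynomial K)) * seriesDelta^[i] (f l)) ∧
    ∀ f : Fin n → PowerSeries (Polynomial K),
      (∀ p, f p = (a p : PowerSeries (Polynomial K)) +
          PowerSeries.X * ∑ i ∈ Finset.range (k + 1), ∑ l,
            (B i p l : PowerSeries (Polynomial K)) * seriesDelta^[i] (f l)) →
      (∀ p, PowerSeries.coeff 0 (f p) = (a p).coeff 0) ∧
      ∀ N : ℕ, ∀ p, PowerSeries.coeff (N + 1) (f p) = (a p).coeff (N + 1) +
        ∑ i ∈ Finset.range (k + 1), ∑ j ∈ Finset.range (N + 1), ∑ l,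
          (B i p l).coeff j * (Polynomial.divX)^[i] (PowerSeries.coeff (N - j) (f l)) :=
  unique_solution_of_linear_delta_system_general K n k a B
end

section
/- Let K be a field of characteristic zero, let n, k ≥ 1, let λ_0, …, λ_{n−1} ∈ K \ {0}, and let ω ∈ K be a primitive k-th root of unity. Define the (nk)×(nk) matrix C over K with entries, for u, v = 0, …, nk−1, given by c_{u,v} = (ω^{u mod k}·λ_{⌊u/k⌋})^{⌊v/n⌋} if ⌊u/k⌋ ≡ v (mod n), and c_{u,v} = 0 otherwise. Then det(C) = ε·(Π_{0 ≤ i < j < k}(ω^j − ω^i))^n · Π_{ℓ=0}^{n−1} λ_ℓ^{k(k−1)/2} for some sign ε ∈ {1, −1}; in particular, det(C) ≠ 0. -/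
open Finset

lemma prod_Ioi_eq_range {M : Type*} [CommMonoid M] (k : ℕ) (F : ℕ → ℕ → M) :
    ∏ i : Fin k, ∏ j ∈ Finset.Ioi i, F (i : ℕ) (j : ℕ)
      = ∏ j ∈ Finset.range k, ∏ i ∈ Finset.range j, F i j := by
  have h1 : ∀ i : Fin k, ∏ j ∈ Finset.Ioi i, F (i : ℕ) (j : ℕ)
      = ∏ j : Fin k, if i < j then F (i : ℕ) (j : ℕ) else 1 := by
    intro i
    rw [← Finset.prod_filter, Finset.filter_lt_eq_Ioi]
  simp_rw [h1]
  rw [Finset.prod_comm]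
  rw [← Fin.prod_univ_eq_prod_range (fun j => ∏ i ∈ Finset.range j, F i j) k]
  refine Finset.prod_congr rfl fun j _ => ?_
  have h2 : ∏ i : Fin k, (if i < j then F (i : ℕ) (j : ℕ) else 1)
      = ∏ i ∈ Finset.range k, (if i < (j : ℕ) then F i (j : ℕ) else 1) := by
    rw [← Fin.prod_univ_eq_prod_range]
    exact Finset.prod_congr rfl fun i _ => if_congr Fin.lt_def rfl rfl
  rw [h2, ← Finset.prod_filter]
  congr 1
  ext i
  simp only [Finset.mem_filter, Finset.mem_range]
  exact ⟨fun h => h.2, fun h => ⟨h.trans j.isLt, h⟩⟩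

lemma card_pairs (k : ℕ) : ∑ i : Fin k, (Finset.Ioi i).card = k * (k - 1) / 2 := by
  simp only [Fin.card_Ioi]
  rw [Fin.sum_univ_eq_sum_range (fun i => k - 1 - i) k]
  calc ∑ i ∈ Finset.range k, (k - 1 - i) = ∑ i ∈ Finset.range k, i :=
        Finset.sum_range_reflect (fun j => j) k
    _ = k * (k - 1) / 2 := Finset.sum_range_id k

theorem vandermonde_block_determinant
    (K : Type*) [Field K] [CharZero K] (n k : ℕ) (hn : 1 ≤ n) (hk : 1 ≤ k)
    (lam : ℕ → K) (hlam : ∀ l < n, lam l ≠ 0)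
    (om : K) (hom : IsPrimitiveRoot om k)
    (C : Matrix (Fin (n * k)) (Fin (n * k)) K)
    (hC : ∀ u v : Fin (n * k),
      C u v = if (u : ℕ) / k % n = (v : ℕ) % n
        then (om ^ ((u : ℕ) % k) * lam ((u : ℕ) / k)) ^ ((v : ℕ) / n)
        else 0) :
    ∃ ε : K, (ε = 1 ∨ ε = -1) ∧
      C.det = ε * (∏ j ∈ Finset.range k, ∏ i ∈ Finset.range j, (om ^ j - om ^ i)) ^ n *
        ∏ l ∈ Finset.range n, lam l ^ (k * (k - 1) / 2) ∧
      C.det ≠ 0 := by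
  have hkpos : 0 < k := hk
  have hnpos : 0 < n := hn
  -- row equivalence
  let e : Fin (n * k) ≃ Fin k × Fin n :=
    { toFun := fun u => (⟨(u : ℕ) % k, Nat.mod_lt _ hkpos⟩,
        ⟨(u : ℕ) / k, Nat.div_lt_of_lt_mul (lt_of_lt_of_eq u.isLt (Nat.mul_comm n k))⟩)
      invFun := fun p => ⟨k * (p.2 : ℕ) + (p.1 : ℕ), by
        have h1 : k * (p.2 : ℕ) + (p.1 : ℕ) < k * ((p.2 : ℕ) + 1) := by
          rw [Nat.mul_add, Nat.mul_one]; exact Nat.add_lt_add_left p.1.isLt _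
        exact lt_of_lt_of_le h1 (by rw [Nat.mul_comm n k]; exact Nat.mul_le_mul_left k p.2.isLt)⟩
      left_inv := fun u => Fin.ext (by simp [Nat.mul_comm, Nat.div_add_mod])
      right_inv := fun p => by
        ext
        · simp [Nat.mul_add_mod, Nat.mod_eq_of_lt p.1.isLt]
        · simp [Nat.mul_add_div hkpos, Nat.div_eq_of_lt p.1.isLt] }
  -- column equivalence
  let f : Fin (n * k) ≃ Fin k × Fin n :=
    { toFun := fun v => (⟨(v : ℕ) / n, Nat.div_lt_of_lt_mul v.isLt⟩,
        ⟨(v : ℕ) % n, Nat.mod_lt _ hnpos⟩)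
      invFun := fun p => ⟨n * (p.1 : ℕ) + (p.2 : ℕ), by
        have h1 : n * (p.1 : ℕ) + (p.2 : ℕ) < n * ((p.1 : ℕ) + 1) := by
          rw [Nat.mul_add, Nat.mul_one]; exact Nat.add_lt_add_left p.2.isLt _
        exact lt_of_lt_of_le h1 (Nat.mul_le_mul_left n p.1.isLt)⟩
      left_inv := fun v => Fin.ext (by simp [Nat.div_add_mod])
      right_inv := fun p => by
        ext
        · simp [Nat.mul_add_div hnpos, Nat.div_eq_of_lt p.2.isLt]
        · simp [Nat.mul_add_mod, Nat.mod_eq_of_lt p.2.isLt] }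
  set D : Fin n → Matrix (Fin k) (Fin k) K :=
    fun a => Matrix.vandermonde (fun b => om ^ (b : ℕ) * lam (a : ℕ)) with hD
  set σ : Equiv.Perm (Fin (n * k)) := f.trans e.symm with hσ
  have hCeq : C = ((Matrix.blockDiagonal D).submatrix e e).submatrix id σ := by
    ext u v
    have hdiv : (u : ℕ) / k < n := Nat.div_lt_of_lt_mul (lt_of_lt_of_eq u.isLt (Nat.mul_comm n k))
    rw [hC]
    simp only [Matrix.submatrix_apply, id_eq, hσ, Equiv.trans_apply, Equiv.apply_symm_apply,
      Matrix.blockDiagonal_apply, hD, Matrix.vandermonde_apply]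
    have he : e u = (⟨(u : ℕ) % k, Nat.mod_lt _ hkpos⟩,
        ⟨(u : ℕ) / k, hdiv⟩) := rfl
    have hf : f v = (⟨(v : ℕ) / n, Nat.div_lt_of_lt_mul v.isLt⟩,
        ⟨(v : ℕ) % n, Nat.mod_lt _ hnpos⟩) := rfl
    rw [he, hf]
    simp only [Fin.mk.injEq]
    rw [Nat.mod_eq_of_lt hdiv]
  have hdetC : C.det = (Equiv.Perm.sign σ : ℤ) * ∏ a : Fin n, (D a).det := by
    rw [hCeq, Matrix.det_permute', Matrix.det_submatrix_equiv_self, Matrix.det_blockDiagonal]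
  -- compute each block determinant
  set P : K := ∏ j ∈ Finset.range k, ∏ i ∈ Finset.range j, (om ^ j - om ^ i) with hP
  have hblock : ∀ a : Fin n, (D a).det = P * lam (a : ℕ) ^ (k * (k - 1) / 2) := by
    intro a
    rw [hD, Matrix.det_vandermonde]
    calc ∏ i : Fin k, ∏ j ∈ Finset.Ioi i, (om ^ (j : ℕ) * lam ↑a - om ^ (i : ℕ) * lam ↑a)
        = ∏ i : Fin k, ∏ j ∈ Finset.Ioi i, ((om ^ (j : ℕ) - om ^ (i : ℕ)) * lam ↑a) := by
          exact Finset.prod_congr rfl fun i _ => Finset.prod_congr rfl fun j _ => by ring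
      _ = (∏ i : Fin k, ∏ j ∈ Finset.Ioi i, (om ^ (j : ℕ) - om ^ (i : ℕ)))
            * ∏ i : Fin k, lam ↑a ^ (Finset.Ioi i).card := by
          rw [← Finset.prod_mul_distrib]
          exact Finset.prod_congr rfl fun i _ => by
            rw [Finset.prod_mul_distrib, Finset.prod_const]
      _ = P * lam ↑a ^ (k * (k - 1) / 2) := by
          rw [hP, ← prod_Ioi_eq_range k (fun b c => om ^ c - om ^ b),
            Finset.prod_pow_eq_pow_sum, card_pairs]
  have hprod : ∏ a : Fin n, (D a).det
      = P ^ n * ∏ l ∈ Finset.range n, lam l ^ (k * (k - 1) / 2) := by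
    simp_rw [hblock]
    rw [Finset.prod_mul_distrib, Finset.prod_const, Finset.card_univ, Fintype.card_fin,
      Fin.prod_univ_eq_prod_range (fun l => lam l ^ (k * (k - 1) / 2)) n]
  -- nonvanishing
  have homne : om ≠ 0 := hom.ne_zero (by omega)
  have hPne : P ≠ 0 := by
    rw [hP]
    refine Finset.prod_ne_zero_iff.mpr fun j hj => Finset.prod_ne_zero_iff.mpr fun i hi => ?_
    rw [Finset.mem_range] at hj
    rw [Finset.mem_range] at hi
    have h1 : om ^ (j - i) ≠ 1 := hom.pow_ne_one_of_pos_of_lt (by omega) (by omega)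
    intro h
    have h2 : om ^ j = om ^ i := sub_eq_zero.mp h
    have h3 : om ^ (j - i) * om ^ i = om ^ j := by rw [← pow_add]; congr 1; omega
    have h4 : om ^ i ≠ 0 := pow_ne_zero _ homne
    exact h1 (mul_right_cancel₀ h4 (h3.trans (h2.trans (one_mul (om ^ i)).symm)))
  have hlamne : (∏ l ∈ Finset.range n, lam l ^ (k * (k - 1) / 2)) ≠ 0 :=
    Finset.prod_ne_zero_iff.mpr fun l hl => pow_ne_zero _ (hlam l (Finset.mem_range.mp hl))
  have hε : ((Equiv.Perm.sign σ : ℤ) : K) = 1 ∨ ((Equiv.Perm.sign σ : ℤ) : K) = -1 := by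
    rcases Int.units_eq_one_or (Equiv.Perm.sign σ) with hs | hs <;> rw [hs] <;> simp
  refine ⟨((Equiv.Perm.sign σ : ℤ) : K), hε, ?_, ?_⟩
  · rw [hdetC, hprod]; ring
  · rw [hdetC, hprod]
    have hε0 : ((Equiv.Perm.sign σ : ℤ) : K) ≠ 0 := by
      rcases hε with hs | hs <;> rw [hs] <;> norm_num
    exact mul_ne_zero hε0 (mul_ne_zero (pow_ne_zero _ hPne) hlamne)
end

section
/- Fix d ≥ 1, k ≥ 1, a vector m = (m_1,…,m_k) of positive integers, a vector p = (p_1,…,p_k) of polynomials in ℤ[i_1,…,i_d, n] of total degree at most one, finite step sets S_r ⊆ ℤ^d indexed by r ∈ Π_{q=1}^{k}{0,…,m_q−1}, and a starting point i_0 ∈ ℤ^d. Let S be the disjoint union of the sets S_r, formally the set of pairs (r, u) with u ∈ S_r. For indices r, s define S_r^s = {u ∈ S_r : for all (z, n) ∈ ℤ^d × ℕ with p(z,n) ≡ r (mod m), one has p(z+u, n+1) ≡ s (mod m)}. A walk of length N starting at i_0 in the model is a sequence (r_1,u_1), …, (r_N,u_N) of elements of S such that, with positions z_0 = i_0 and z_t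 = z_{t−1} + u_t, one has p(z_{t−1}, t−1) ≡ r_t (mod m) for t = 1,…,N; the vector associated to the walk is the function a : S → ℕ where a(r,u) is the number of indices t with (r_t, u_t) = (r, u). Then, for a function a : S → ℕ with N = Σ_{(r,u)∈S} a(r,u), there exists a walk starting at i_0 whose associated vector is a if and only if there exists a sequence r_0, r_1, …, r_N of indices in Π_{q=1}^{k}{0,…,m_q−1} such that p(i_0, 0) ≡ r_0 (mod m) and, for every pair of indices (r, s), the number of t ∈ {1,…,N} with (r_{t−1}, r_t) = (r, s) equals Σ_{u ∈ S_r^s} a(r,u) (i.e., the directed multigraph with the index vectors as vertices and Σ_{u∈S_r^s} a(r,u) edges from r to s has an Eulerian path starting at r_0). -/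
/-!
Because `p` is affine, `p(z + u, n + 1) - p(z, n)` depends only on the step `u`, so along any walk
the residue of `p` mod `m` evolves by a position-independent rule `r ↦ r + δ(u)`. A walk is thus a
sequence of residues `r₀, …, r_N` whose transitions are labelled by steps `u ∈ S_r` with
`r + δ(u) ≡ s`, and counting labels per transition gives the edge counts. Conversely, `S_r^s`
contains these steps, with equality whenever `r` is a value of `p` mod `m`; since both the edge
counts and the sums `Σ_s Σ_{r + δ(u) ≡ s} a(r, u)` total `N`, the prescribed counts force equality
everywhere, and then the steps of each transition type can be distributed over its occurrences.
-/

open Finset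

theorem Fin.partialSum_castSucc {M : Type*} [AddCommMonoid M] {n : ℕ} (f : Fin n → M)
    (t : Fin n) : partialSum f t.castSucc = ∑ i ∈ Iio t, f i := by
  have hsum : ∀ j : Fin (n + 1), partialSum f j = ∑ i with i.castSucc < j, f i := by
    intro j
    induction j using Fin.induction with
    | zero => simp
    | succ j ih =>
      have hins : univ.filter (fun i : Fin n => i.castSucc < j.succ) =
          insert j (univ.filter fun i : Fin n => i.castSucc < j.castSucc) := by
        ext i
        simp only [mem_filter, mem_univ, true_and, mem_insert, Fin.castSucc_lt_succ_iff,
          Fin.castSucc_lt_castSucc_iff]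
        exact le_iff_eq_or_lt
      rw [partialSum_succ, ih, hins, sum_insert (by simp), add_comm]
  rw [hsum]
  congr 1
  ext i
  simp

theorem Finset.exists_card_filter_eq_of_card_eq_sum {ι β : Type*} [DecidableEq ι]
    [DecidableEq β] [Nonempty β] {X : Finset β} {f : β → ℕ} : ∀ {F : Finset ι}, #F = ∑ u ∈ X, f u →
      ∃ g : ι → β, (∀ t ∈ F, g t ∈ X) ∧ ∀ u ∈ X, #{t ∈ F | g t = u} = f u := by
  induction X using Finset.induction_on with
  | empty => exact fun _ => ⟨fun _ => Classical.arbitrary β, by simp_all⟩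
  | insert x X hx ih =>
    intro F hF
    rw [sum_insert hx] at hF
    obtain ⟨F', hF'F, hF'⟩ := exists_subset_card_eq (s := F) (n := f x) (by omega)
    obtain ⟨g, hgX, hgcard⟩ := ih (F := F \ F') (by rw [card_sdiff_of_subset hF'F]; omega)
    refine ⟨fun t => if t ∈ F' then x else g t, fun t ht => ?_, fun u hu => ?_⟩
    · dsimp only
      split_ifs with h
      · exact mem_insert_self x X
      · exact mem_insert_of_mem (hgX t (mem_sdiff.2 ⟨ht, h⟩))
    rcases mem_insert.1 hu with rfl | hu
    · rw [← hF']
      congr 1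
      ext t
      simp only [mem_filter]
      split_ifs with h
      · exact ⟨fun _ => h, fun _ => ⟨hF'F h, rfl⟩⟩
      · exact ⟨fun ⟨ht, htu⟩ => absurd (htu ▸ hgX t (mem_sdiff.2 ⟨ht, h⟩)) hx,
          fun h' => absurd h' h⟩
    · rw [← hgcard u hu]
      congr 1
      ext t
      simp only [mem_filter, mem_sdiff]
      split_ifs with h
      · exact ⟨fun ⟨_, hxu⟩ => absurd (hxu ▸ hu) hx, fun ⟨⟨_, h'⟩, _⟩ => absurd h h'⟩
      · exact ⟨fun ⟨ht, hgu⟩ => ⟨⟨ht, h⟩, hgu⟩, fun ⟨⟨ht, _⟩, hgu⟩ => ⟨ht, hgu⟩⟩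

theorem Finset.sum_filter_imp_of_not {ι M : Type*} [AddCommMonoid M] {s : Finset ι} {f : ι → M}
    {P : Prop} {Q : ι → Prop} [Decidable P] [DecidablePred Q] (h : ¬P → ∀ i ∈ s, f i = 0) :
    ∑ i ∈ s with (P → Q i), f i = ∑ i ∈ s with Q i, f i := by
  by_cases hP : P
  · simp [hP]
  · rw [sum_eq_zero fun i hi => h hP i (mem_filter.1 hi).1,
      sum_eq_zero fun i hi => h hP i (mem_filter.1 hi).1]

section LabelledWalk

variable {V U : Type*} {N : ℕ} (next : V → U → V)

theorem eq_of_labels_of_apply_zero {seq seq' : Fin (N + 1) → V} (up : Fin N → U)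
    (h0 : seq 0 = seq' 0) (h : ∀ t, next (seq t.castSucc) (up t) = seq t.succ)
    (h' : ∀ t, next (seq' t.castSucc) (up t) = seq' t.succ) : seq = seq' :=
  funext fun j => Fin.induction h0 (fun t ih => by rw [← h, ← h', ih]) j

variable [DecidableEq V]

def transitionCount (seq : Fin (N + 1) → V) (r s : V) : ℕ :=
  #{t : Fin N | seq t.castSucc = r ∧ seq t.succ = s}

variable (S : V → Finset U)

theorem transitionCount_eq_sum_card_labels [DecidableEq U] (seq : Fin (N + 1) → V)
    (up : Fin N → U) (hS : ∀ t, up t ∈ S (seq t.castSucc))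
    (hnext : ∀ t, next (seq t.castSucc) (up t) = seq t.succ) (r s : V) :
    transitionCount seq r s =
      ∑ u ∈ S r with next r u = s, #{t : Fin N | seq t.castSucc = r ∧ up t = u} := by
  rw [transitionCount, card_eq_sum_card_fiberwise (f := up) (t := {u ∈ S r | next r u = s})]
  · refine sum_congr rfl fun u hu => ?_
    rw [filter_filter]
    refine congrArg card (filter_congr fun t _ => ?_)
    rw [mem_filter] at hu
    constructor
    · rintro ⟨⟨hr, -⟩, rfl⟩
      exact ⟨hr, rfl⟩
    · rintro ⟨hr, rfl⟩
      exact ⟨⟨hr, by rw [← hnext t, hr]; exact hu.2⟩, rfl⟩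
  · intro t ht
    obtain ⟨-, rfl, rfl⟩ := mem_filter.1 ht
    exact mem_filter.2 ⟨hS t, hnext t⟩

theorem exists_labels_of_transitionCount_eq [DecidableEq U] [Nonempty U] (a : V → U → ℕ)
    (ha : ∀ r u, u ∉ S r → a r u = 0) (seq : Fin (N + 1) → V)
    (h : ∀ r s, transitionCount seq r s = ∑ u ∈ S r with next r u = s, a r u) :
    ∃ up : Fin N → U, (∀ t, up t ∈ S (seq t.castSucc)) ∧
      (∀ t, next (seq t.castSucc) (up t) = seq t.succ) ∧
      ∀ r u, #{t : Fin N | seq t.castSucc = r ∧ up t = u} = a r u := by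
  choose g hgS hgcard using fun r s => exists_card_filter_eq_of_card_eq_sum (h r s)
  set up : Fin N → U := fun t => g (seq t.castSucc) (seq t.succ) t
  have hup : ∀ t, up t ∈ S (seq t.castSucc) ∧ next (seq t.castSucc) (up t) = seq t.succ :=
    fun t => mem_filter.1 (hgS _ _ t (by simp))
  refine ⟨up, fun t => (hup t).1, fun t => (hup t).2, fun r u => ?_⟩
  by_cases hu : u ∈ S r
  · rw [← hgcard r (next r u) u (mem_filter.2 ⟨hu, rfl⟩), filter_filter]
    refine congrArg card (filter_congr fun t _ => ⟨?_, ?_⟩)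
    · rintro ⟨rfl, rfl⟩
      rw [(hup t).2]
      exact ⟨⟨rfl, rfl⟩, rfl⟩
    · rintro ⟨⟨rfl, hs⟩, hgu⟩
      rw [← hs] at hgu
      exact ⟨rfl, hgu⟩
  · rw [ha r u hu, card_eq_zero, filter_eq_empty_iff]
    rintro t - ⟨rfl, rfl⟩
    exact hu (hup t).1

theorem transitionCount_eq_of_le [Fintype V] (a : V → U → ℕ) (seq : Fin (N + 1) → V)
    (hN : N = ∑ r, ∑ u ∈ S r, a r u)
    (hle : ∀ r s, ∑ u ∈ S r with next r u = s, a r u ≤ transitionCount seq r s)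
    (r s : V) :
    transitionCount seq r s = ∑ u ∈ S r with next r u = s, a r u := by
  have htotal : ∑ rs : V × V, ∑ u ∈ S rs.1 with next rs.1 u = rs.2, a rs.1 u =
      ∑ rs : V × V, transitionCount seq rs.1 rs.2 := by
    calc _ = ∑ r, ∑ u ∈ S r, a r u := by
          rw [Fintype.sum_prod_type]
          refine sum_congr rfl fun r _ => ?_
          convert sum_fiberwise_of_maps_to (g := next r) (fun _ _ => mem_univ _) (a r)
      _ = #(univ : Finset (Fin N)) := by rw [card_univ, Fintype.card_fin, hN]
      _ = _ := by
          rw [card_eq_sum_card_fiberwise (f := fun t => (seq t.castSucc, seq t.succ))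
            (fun _ _ => mem_univ _)]
          simp only [transitionCount, Prod.ext_iff]
  exact ((sum_eq_sum_iff_of_le fun rs _ => hle rs.1 rs.2).1 htotal (r, s) (mem_univ _)).symm

end LabelledWalk

def finMod {n : ℕ} (hn : 0 < n) (x : ℤ) : Fin n :=
  ⟨(x % n).toNat, by
    have := Int.emod_lt_of_pos x (Int.natCast_pos.2 hn)
    omega⟩

theorem coe_finMod {n : ℕ} (hn : 0 < n) (x : ℤ) : ((finMod hn x : ℕ) : ℤ) = x % n :=
  Int.toNat_of_nonneg (Int.emod_nonneg x (Int.natCast_pos.2 hn).ne')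

theorem finMod_eq_iff {n : ℕ} (hn : 0 < n) {x : ℤ} {i : Fin n} :
    finMod hn x = i ↔ x % n = i := by
  rw [Fin.ext_iff, ← Nat.cast_inj (R := ℤ), coe_finMod]

theorem finMod_coe_add {n : ℕ} (hn : 0 < n) (x y : ℤ) :
    finMod hn ((finMod hn x : ℕ) + y) = finMod hn (x + y) := by
  rw [finMod_eq_iff, coe_finMod, coe_finMod, Int.emod_add_emod]

section AffineResidues

variable {d k : ℕ} {m : Fin k → ℕ} (hm : ∀ q, 0 < m q)

def residue (v : Fin k → ℤ) : ∀ q, Fin (m q) := fun q => finMod (hm q) (v q)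

theorem residue_eq_iff {v : Fin k → ℤ} {r : ∀ q, Fin (m q)} :
    residue hm v = r ↔ ∀ q, v q % m q = r q :=
  funext_iff.trans (forall_congr' fun _ => finMod_eq_iff _)

-- `∑ l, α q l * u l + γ q` is the increment `p(z + u, n + 1) - p(z, n)`.
def residueStep (γ : Fin k → ℤ) (α : Fin k → Fin d → ℤ) (r : ∀ q, Fin (m q))
    (u : Fin d → ℤ) : ∀ q, Fin (m q) :=
  fun q => finMod (hm q) ((r q : ℕ) + (∑ l, α q l * u l + γ q))

variable {c γ : Fin k → ℤ} {α : Fin k → Fin d → ℤ} {pEval : (Fin d → ℤ) → ℤ → Fin k → ℤ}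

theorem residue_pEval_add_succ
    (hp : ∀ z n q, pEval z n q = c q + (∑ l, α q l * z l) + γ q * n)
    (z u : Fin d → ℤ) (n : ℤ) :
    residue hm (pEval (z + u) (n + 1)) = residueStep hm γ α (residue hm (pEval z n)) u := by
  funext q
  simp only [residue, residueStep, finMod_coe_add]
  congr 1
  simp only [hp, Pi.add_apply, mul_add, sum_add_distrib]
  ring

theorem forall_pEval_step_mod_iff
    (hp : ∀ z n q, pEval z n q = c q + (∑ l, α q l * z l) + γ q * n)
    (r s : ∀ q, Fin (m q)) (u : Fin d → ℤ) :
    (∀ (z : Fin d → ℤ) (n : ℕ), (∀ q, pEval z n q % m q = r q) →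
        ∀ q, pEval (z + u) (n + 1) q % m q = s q) ↔
      ((∃ (z : Fin d → ℤ) (n : ℕ), residue hm (pEval z n) = r) → residueStep hm γ α r u = s) := by
  simp only [← residue_eq_iff hm, residue_pEval_add_succ hm hp]
  exact ⟨fun h ⟨z, n, hzn⟩ => hzn ▸ h z n hzn, fun h z n hzn => hzn ▸ h ⟨z, n, hzn⟩⟩

def residueWalk (pEval : (Fin d → ℤ) → ℤ → Fin k → ℤ) (i0 : Fin d → ℤ) {N : ℕ}
    (up : Fin N → Fin d → ℤ) (j : Fin (N + 1)) : ∀ q, Fin (m q) :=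
  residue hm (pEval (i0 + Fin.partialSum up j) (j : ℕ))

variable (i0 : Fin d → ℤ) {N : ℕ} (up : Fin N → Fin d → ℤ)

theorem residueWalk_zero : residueWalk hm pEval i0 up 0 = residue hm (pEval i0 0) := by
  simp [residueWalk]

theorem residueWalk_castSucc (t : Fin N) :
    residueWalk hm pEval i0 up t.castSucc =
      residue hm (pEval (i0 + ∑ t' ∈ Iio t, up t') (t : ℤ)) := by
  rw [residueWalk, Fin.partialSum_castSucc, Fin.val_castSucc]

theorem residueStep_residueWalk
    (hp : ∀ z n q, pEval z n q = c q + (∑ l, α q l * z l) + γ q * n) (t : Fin N) :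
    residueStep hm γ α (residueWalk hm pEval i0 up t.castSucc) (up t) =
      residueWalk hm pEval i0 up t.succ := by
  rw [residueWalk, residueWalk, ← residue_pEval_add_succ hm hp, Fin.partialSum_succ, add_assoc,
    Fin.val_succ, Fin.val_castSucc, Nat.cast_succ]

end AffineResidues

open scoped Classical

theorem associated_vector_iff_eulerian_path_general
    (d : ℕ) (k : ℕ)
    (m : Fin k → ℕ) (hm : ∀ q, 0 < m q)
    -- p = (p₁,…,p_k), affine polynomials in (i₁,…,i_d, n):
    -- p q = c q + Σ_l α q l · i_l + γ q · n
    (c γ : Fin k → ℤ) (α : Fin k → Fin d → ℤ)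
    (pEval : (Fin d → ℤ) → ℤ → Fin k → ℤ)
    (hp : ∀ z n q, pEval z n q = c q + (∑ l, α q l * z l) + γ q * n)
    -- step sets S_r ⊆ ℤ^d indexed by residues r ∈ Π_q {0,…,m_q−1}
    (S : (∀ q, Fin (m q)) → Finset (Fin d → ℤ))
    -- starting point i₀ ∈ ℤ^d
    (i0 : Fin d → ℤ)
    -- a vector a : S → ℕ on the disjoint union of the step sets, of total weight N
    (a : (∀ q, Fin (m q)) → (Fin d → ℤ) → ℕ)
    (ha : ∀ r u, u ∉ S r → a r u = 0)
    (N : ℕ) (hN : N = ∑ r : (∀ q, Fin (m q)), ∑ u ∈ S r, a r u) :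
    -- there is a walk starting at i₀ whose associated vector is a ...
    ((∃ (st : Fin N → (∀ q, Fin (m q))) (up : Fin N → (Fin d → ℤ)),
        (∀ t, up t ∈ S (st t)) ∧
        (∀ (t : Fin N) (q : Fin k),
          pEval (i0 + ∑ t' ∈ Finset.Iio t, up t') (t : ℤ) q % (m q : ℤ)
            = ((st t q : ℕ) : ℤ)) ∧
        (∀ r u, a r u =
          (Finset.univ.filter (fun t : Fin N => st t = r ∧ up t = u)).card))
      ↔
      -- ... iff the multigraph with Σ_{u ∈ S_r^s} a(r,u) edges from r to s has an
      -- Eulerian path starting at a vertex r₀ with p(i₀,0) ≡ r₀ (mod m)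
      (∃ seq : Fin (N + 1) → (∀ q, Fin (m q)),
        (∀ q : Fin k, pEval i0 0 q % (m q : ℤ) = ((seq 0 q : ℕ) : ℤ)) ∧
        ∀ r s : (∀ q, Fin (m q)),
          (Finset.univ.filter
            (fun t : Fin N => seq t.castSucc = r ∧ seq t.succ = s)).card
          = ∑ u ∈ (S r).filter (fun u => ∀ (z : Fin d → ℤ) (n : ℕ),
              (∀ q, pEval z (n : ℤ) q % (m q : ℤ) = ((r q : ℕ) : ℤ)) →
              (∀ q, pEval (z + u) ((n : ℤ) + 1) q % (m q : ℤ) = ((s q : ℕ) : ℤ))),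
            a r u)) := by
  simp_rw [forall_pEval_step_mod_iff hm hp, ← residue_eq_iff hm]
  constructor
  · rintro ⟨st, up, hS, hpos, hcount⟩
    have hst : ∀ t, residueWalk hm pEval i0 up t.castSucc = st t :=
      fun t => (residueWalk_castSucc hm i0 up t).trans (hpos t)
    refine ⟨residueWalk hm pEval i0 up, (residueWalk_zero hm i0 up).symm, fun r s => ?_⟩
    have := transitionCount_eq_sum_card_labels (residueStep hm γ α) S _ up
      (fun t => hst t ▸ hS t) (residueStep_residueWalk hm i0 up hp) r s
    simp only [hst, ← hcount] at this
    rw [transitionCount] at this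
    rw [this, sum_filter_imp_of_not]
    intro hr u _
    rw [hcount, card_eq_zero, filter_eq_empty_iff]
    rintro t - ⟨rfl, -⟩
    exact hr ⟨_, _, hst t⟩
  · rintro ⟨seq, h0, hcount⟩
    have hle : ∀ r s,
        ∑ u ∈ S r with residueStep hm γ α r u = s, a r u ≤ transitionCount seq r s := fun r s => by
        rw [transitionCount, hcount]
        exact sum_le_sum_of_subset (monotone_filter_right _ fun u _ hu _ => hu)
    obtain ⟨up, hS, hnext, hlabels⟩ := exists_labels_of_transitionCount_eq _ S a ha seq
      (transitionCount_eq_of_le _ S a seq hN hle)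
    have hseq : seq = residueWalk hm pEval i0 up :=
      eq_of_labels_of_apply_zero _ up (h0.symm.trans (residueWalk_zero hm i0 up).symm) hnext
        (residueStep_residueWalk hm i0 up hp)
    refine ⟨fun t => seq t.castSucc, up, hS, fun t => ?_, fun r u => (hlabels r u).symm⟩
    rw [hseq]
    exact (residueWalk_castSucc hm i0 up t).symm

theorem associated_vector_iff_eulerian_path
    (d : ℕ) (hd : 1 ≤ d) (k : ℕ) (hk : 1 ≤ k)
    (m : Fin k → ℕ) (hm : ∀ q, 0 < m q)
    -- p = (p₁,…,p_k), affine polynomials in (i₁,…,i_d, n):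
    -- p q = c q + Σ_l α q l · i_l + γ q · n
    (c γ : Fin k → ℤ) (α : Fin k → Fin d → ℤ)
    (pEval : (Fin d → ℤ) → ℤ → Fin k → ℤ)
    (hp : ∀ z n q, pEval z n q = c q + (∑ l, α q l * z l) + γ q * n)
    -- step sets S_r ⊆ ℤ^d indexed by residues r ∈ Π_q {0,…,m_q−1}
    (S : (∀ q, Fin (m q)) → Finset (Fin d → ℤ))
    -- starting point i₀ ∈ ℤ^d
    (i0 : Fin d → ℤ)
    -- a vector a : S → ℕ on the disjoint union of the step sets, of total weight N
    (a : (∀ q, Fin (m q)) → (Fin d → ℤ) → ℕ)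
    (ha : ∀ r u, u ∉ S r → a r u = 0)
    (N : ℕ) (hN : N = ∑ r : (∀ q, Fin (m q)), ∑ u ∈ S r, a r u) :
    -- there is a walk starting at i₀ whose associated vector is a ...
    ((∃ (st : Fin N → (∀ q, Fin (m q))) (up : Fin N → (Fin d → ℤ)),
        (∀ t, up t ∈ S (st t)) ∧
        (∀ (t : Fin N) (q : Fin k),
          pEval (i0 + ∑ t' ∈ Finset.Iio t, up t') (t : ℤ) q % (m q : ℤ)
            = ((st t q : ℕ) : ℤ)) ∧
        (∀ r u, a r u =
          (Finset.univ.filter (fun t : Fin N => st t = r ∧ up t = u)).card))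
      ↔
      -- ... iff the multigraph with Σ_{u ∈ S_r^s} a(r,u) edges from r to s has an
      -- Eulerian path starting at a vertex r₀ with p(i₀,0) ≡ r₀ (mod m)
      (∃ seq : Fin (N + 1) → (∀ q, Fin (m q)),
        (∀ q : Fin k, pEval i0 0 q % (m q : ℤ) = ((seq 0 q : ℕ) : ℤ)) ∧
        ∀ r s : (∀ q, Fin (m q)),
          (Finset.univ.filter
            (fun t : Fin N => seq t.castSucc = r ∧ seq t.succ = s)).card
          = ∑ u ∈ (S r).filter (fun u => ∀ (z : Fin d → ℤ) (n : ℕ),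
              (∀ q, pEval z (n : ℤ) q % (m q : ℤ) = ((r q : ℕ) : ℤ)) →
              (∀ q, pEval (z + u) ((n : ℤ) + 1) q % (m q : ℤ) = ((s q : ℕ) : ℤ))),
            a r u)) :=
  associated_vector_iff_eulerian_path_general d k m hm c γ α pEval hp S i0 a ha N hN
end

section
/- For the space-inhomogeneous half-plane model of the context, the following identity holds in R[[t]]: (x²y² − t²(x+y)²(1+xy)² − t·x·(1+x²)·y·(1+y²))·F_1 = t·x·y·(x+y)·(1+xy) − t·x·y²·F_0(0,y) − t·y·(x·(1+y²) + t·(x+y)·(1+xy))·F_1(0,y), where for G ∈ R[[t]], G(0,y) denotes the series obtained by setting x = 0 in every t-coefficient of G. -/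
/-!
Split the walks by the parity of `i + j`. An even site is entered only from its four axial
neighbours, which are odd; an odd site is entered from its four axial neighbours, which are even,
and from its four diagonal neighbours, which are odd. Multiplied by `x y`, these recurrences become
two linear equations over `R[[t]]` for `F₀` and `F₁`, whose only boundary terms `F_r(0, y)` account
for the steps that would leave the half-plane. Substituting the first into `x y` times the second
eliminates `F₀`.
-/

open scoped Polynomial LaurentPolynomial

variable {K : Type*} [CommRing K]

section Coefficients

/-- The coefficient of `t ^ n * x ^ i * y ^ j`. Extending it by `0` to `i < 0` makes
multiplication by `x` a shift of `i` for every `i`. -/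
noncomputable def coeffTXY (n : ℕ) (i j : ℤ) : PowerSeries K[T;T⁻¹][X] →+ K :=
  if 0 ≤ i then
    (Finsupp.applyAddHom j).comp <| AddMonoidAlgebra.coeffAddEquiv.toAddMonoidHom.comp <|
      (Polynomial.lcoeff _ i.toNat).toAddMonoidHom.comp (PowerSeries.coeff n).toAddMonoidHom
  else 0

theorem coeffTXY_apply (n : ℕ) (i j : ℤ) (G : PowerSeries K[T;T⁻¹][X]) :
    coeffTXY n i j G =
      if 0 ≤ i then ((PowerSeries.coeff n G).coeff i.toNat).coeff j else 0 := by
  unfold coeffTXY; split_ifs <;> rfl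

theorem coeffTXY_natCast (n i : ℕ) (j : ℤ) (G : PowerSeries K[T;T⁻¹][X]) :
    coeffTXY n i j G = ((PowerSeries.coeff n G).coeff i).coeff j := by
  simp [coeffTXY_apply]

theorem coeffTXY_of_neg {i : ℤ} (hi : i < 0) (n : ℕ) (j : ℤ) (G : PowerSeries K[T;T⁻¹][X]) :
    coeffTXY n i j G = 0 := by
  simp [coeffTXY_apply, hi.not_ge]

theorem ext_coeffTXY {G H : PowerSeries K[T;T⁻¹][X]}
    (h : ∀ n i j, coeffTXY n i j G = coeffTXY n i j H) : G = H := by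
  ext n i j
  simpa only [coeffTXY_natCast] using h n i j

theorem coeffTXY_X_mul (n : ℕ) (i j : ℤ) (G : PowerSeries K[T;T⁻¹][X]) :
    coeffTXY n i j (PowerSeries.C Polynomial.X * G) = coeffTXY n (i - 1) j G := by
  rcases lt_trichotomy i 0 with hi | rfl | hi
  · rw [coeffTXY_of_neg hi, coeffTXY_of_neg (by omega)]
  · simp [coeffTXY_apply, PowerSeries.coeff_C_mul]
  · obtain ⟨k, rfl⟩ : ∃ k : ℕ, i = k + 1 := ⟨(i - 1).toNat, by omega⟩
    rw [add_sub_cancel_right, ← Nat.cast_succ, coeffTXY_natCast, coeffTXY_natCast,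
      PowerSeries.coeff_C_mul, Polynomial.coeff_X_mul]

theorem coeffTXY_T_mul (n : ℕ) (i j k : ℤ) (G : PowerSeries K[T;T⁻¹][X]) :
    coeffTXY n i j (PowerSeries.C (Polynomial.C (LaurentPolynomial.T k)) * G) =
      coeffTXY n i (j - k) G := by
  rw [coeffTXY_apply, coeffTXY_apply, PowerSeries.coeff_C_mul, Polynomial.coeff_C_mul,
    LaurentPolynomial.T, AddMonoidAlgebra.coeff_single_mul_apply, one_mul, neg_add_eq_sub]

theorem coeffTXY_one (n : ℕ) (i j : ℤ) :
    coeffTXY n i j (1 : PowerSeries K[T;T⁻¹][X]) = if n = 0 ∧ i = 0 ∧ j = 0 then 1 else 0 := by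
  rcases lt_or_ge i 0 with hi | hi
  · simp [coeffTXY_of_neg hi, hi.ne]
  · lift i to ℕ using hi
    rw [coeffTXY_natCast, PowerSeries.coeff_one]
    by_cases hn : n = 0 <;> by_cases hi : i = 0 <;>
      simp [hn, hi, Polynomial.coeff_one, ← LaurentPolynomial.T_zero, eq_comm]

theorem coeffTXY_C_T (n : ℕ) (i j k : ℤ) :
    coeffTXY n i j
        (PowerSeries.C (Polynomial.C (LaurentPolynomial.T k)) : PowerSeries K[T;T⁻¹][X]) =
      coeffTXY n i (j - k) 1 := by
  rw [← coeffTXY_T_mul, mul_one]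

theorem coeffTXY_X_mul_succ (n : ℕ) (i j : ℤ) (G : PowerSeries K[T;T⁻¹][X]) :
    coeffTXY (n + 1) i j (PowerSeries.X * G) = coeffTXY n i j G := by
  rw [coeffTXY_apply, coeffTXY_apply, PowerSeries.coeff_succ_X_mul]

theorem coeffTXY_zero_X_mul (i j : ℤ) (G : PowerSeries K[T;T⁻¹][X]) :
    coeffTXY 0 i j (PowerSeries.X * G) = 0 := by
  simp [coeffTXY_apply]

theorem coeffTXY_map_evalZero (n : ℕ) (i j : ℤ) (G : PowerSeries K[T;T⁻¹][X]) :
    coeffTXY n i j (PowerSeries.map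
      ((Polynomial.C : K[T;T⁻¹] →+* K[T;T⁻¹][X]).comp (Polynomial.evalRingHom 0)) G) =
      if i = 0 then coeffTXY n 0 j G else 0 := by
  rcases lt_or_ge i 0 with hi | hi
  · simp [coeffTXY_of_neg hi, hi.ne]
  · lift i to ℕ using hi
    by_cases hi : i = 0 <;>
      simp [hi, coeffTXY_apply, Polynomial.coeff_C, Polynomial.coeff_zero_eq_eval_zero]

theorem apply_eq_zero_of_coeffTXY_eq {F : PowerSeries K[T;T⁻¹][X]} {g : ℤ → ℤ → ℕ → K}
    (hF : ∀ n i j, coeffTXY n i j F = g i j n) {i : ℤ} (hi : i < 0) (j : ℤ) (n : ℕ) :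
    g i j n = 0 := by
  rw [← hF, coeffTXY_of_neg hi]

theorem coeffTXY_eq_of_coeff {F : PowerSeries K[T;T⁻¹][X]} {g : ℤ → ℤ → ℕ → K}
    (hg : ∀ i j n, i < 0 → g i j n = 0)
    (hF : ∀ (n i : ℕ) (j : ℤ), ((PowerSeries.coeff n F).coeff i).coeff j = g i j n)
    (n : ℕ) (i j : ℤ) : coeffTXY n i j F = g i j n := by
  rcases lt_or_ge i 0 with hi | hi
  · rw [coeffTXY_of_neg hi, hg i j n hi]
  · lift i to ℕ using hi
    rw [coeffTXY_natCast, hF]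

end Coefficients

section Walks

def axialSum (g : ℤ → ℤ → ℕ → K) (i j : ℤ) (n : ℕ) : K :=
  g (i - 1) j n + g (i + 1) j n + g i (j - 1) n + g i (j + 1) n

def diagonalSum (g : ℤ → ℤ → ℕ → K) (i j : ℤ) (n : ℕ) : K :=
  g (i - 1) (j - 1) n + g (i - 1) (j + 1) n + g (i + 1) (j - 1) n + g (i + 1) (j + 1) n

def paritySlice (f : ℤ → ℤ → ℕ → K) (r i j : ℤ) (n : ℕ) : K :=
  if (i + j) % 2 = r then f i j n else 0

def axialSteps : Finset (ℤ × ℤ) := {(1, 0), (-1, 0), (0, 1), (0, -1)}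

def kingSteps : Finset (ℤ × ℤ) :=
  {(1, 0), (-1, 0), (0, 1), (0, -1), (1, 1), (1, -1), (-1, 1), (-1, -1)}

theorem sum_kingSteps_eq {f : ℤ → ℤ → ℕ → K} (hfneg : ∀ i j n, i < 0 → f i j n = 0)
    {i : ℤ} (hi : 0 ≤ i) (j : ℤ) (n : ℕ) :
    ∑ st ∈ kingSteps,
        (if 0 ≤ i - st.1 ∧ st ∈ (if (i - st.1 + (j - st.2)) % 2 = 0 then axialSteps else kingSteps)
          then f (i - st.1) (j - st.2) n else 0) =
      axialSum f i j n + if (i + j) % 2 = 1 then diagonalSum f i j n else 0 := by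
  simp (disch := decide) only [kingSteps, axialSteps, Finset.sum_insert, Finset.sum_singleton]
  have hpar : (i - 1 + (j - 1)) % 2 = (i + j) % 2 ∧ (i + 1 + (j + 1)) % 2 = (i + j) % 2 := by
    omega
  have hi' : 0 ≤ i + 1 := by omega
  by_cases hi1 : 1 ≤ i
  · by_cases hp : (i + j) % 2 = 1 <;>
      simp [mem_ite, axialSum, diagonalSum, add_assoc (G := K), hi, hi1, hi', hp, hpar]
  · have hleft : ∀ b, f (i - 1) b n = 0 := fun b => hfneg _ _ _ (by omega)
    by_cases hp : (i + j) % 2 = 1 <;>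
      simp [mem_ite, axialSum, diagonalSum, add_assoc (G := K), hi, hi1, hi', hp, hpar, hleft]

theorem paritySlice_of_neg {f : ℤ → ℤ → ℕ → K} (hfneg : ∀ i j n, i < 0 → f i j n = 0)
    (r : ℤ) : ∀ i j n, i < 0 → paritySlice f r i j n = 0 := fun i j n hi => by
  simp [paritySlice, hfneg i j n hi]

theorem paritySlice_zero_zero {f : ℤ → ℤ → ℕ → K} (hfneg : ∀ i j n, i < 0 → f i j n = 0)
    (hf0 : ∀ i j : ℤ, 0 ≤ i → f i j 0 = if i = 0 ∧ j = 0 then 1 else 0) (i j : ℤ) :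
    paritySlice f 0 i j 0 = if i = 0 ∧ j = 0 then 1 else 0 := by
  rcases lt_or_ge i 0 with hi | hi
  · simp [paritySlice, hfneg i j 0 hi, hi.ne]
  · unfold paritySlice; split_ifs <;> simp_all

theorem paritySlice_one_zero {f : ℤ → ℤ → ℕ → K} (hfneg : ∀ i j n, i < 0 → f i j n = 0)
    (hf0 : ∀ i j : ℤ, 0 ≤ i → f i j 0 = if i = 0 ∧ j = 0 then 1 else 0) (i j : ℤ) :
    paritySlice f 1 i j 0 = 0 := by
  rcases lt_or_ge i 0 with hi | hi
  · simp [paritySlice, hfneg i j 0 hi]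
  · rw [paritySlice, hf0 i j hi]
    split_ifs <;> first | rfl | omega

theorem paritySlice_zero_succ {f : ℤ → ℤ → ℕ → K}
    (hstep : ∀ {i}, 0 ≤ i → ∀ j n,
      f i j (n + 1) = axialSum f i j n + if (i + j) % 2 = 1 then diagonalSum f i j n else 0)
    {i : ℤ} (hi : 0 ≤ i) (j : ℤ) (n : ℕ) :
    paritySlice f 0 i j (n + 1) = axialSum (paritySlice f 1) i j n := by
  simp only [paritySlice, axialSum, diagonalSum, hstep hi, ← Int.even_iff, ← Int.odd_iff,
    ← Int.not_even_iff_odd, parity_simps]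
  by_cases hei : Even i <;> by_cases hej : Even j <;> simp [hei, hej]

theorem paritySlice_one_succ {f : ℤ → ℤ → ℕ → K}
    (hstep : ∀ {i}, 0 ≤ i → ∀ j n,
      f i j (n + 1) = axialSum f i j n + if (i + j) % 2 = 1 then diagonalSum f i j n else 0)
    {i : ℤ} (hi : 0 ≤ i) (j : ℤ) (n : ℕ) :
    paritySlice f 1 i j (n + 1) =
      axialSum (paritySlice f 0) i j n + diagonalSum (paritySlice f 1) i j n := by
  simp only [paritySlice, axialSum, diagonalSum, hstep hi, ← Int.even_iff, ← Int.odd_iff,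
    ← Int.not_even_iff_odd, parity_simps]
  by_cases hei : Even i <;> by_cases hej : Even j <;> simp [hei, hej]

end Walks

section FunctionalEquations

local notation "𝐱" => (PowerSeries.C Polynomial.X : PowerSeries K[T;T⁻¹][X])
local notation "𝐲" => PowerSeries.C (Polynomial.C (LaurentPolynomial.T 1 : K[T;T⁻¹]))
local notation "𝐭" => (PowerSeries.X : PowerSeries K[T;T⁻¹][X])
local notation "ev₀" => PowerSeries.map (RingHom.comp Polynomial.C (Polynomial.evalRingHom 0))

variable {F₀ F₁ : PowerSeries K[T;T⁻¹][X]} {g₀ g₁ : ℤ → ℤ → ℕ → K}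

theorem functional_eq_even (hF₀ : ∀ n i j, coeffTXY n i j F₀ = g₀ i j n)
    (hF₁ : ∀ n i j, coeffTXY n i j F₁ = g₁ i j n)
    (hinit : ∀ i j, g₀ i j 0 = if i = 0 ∧ j = 0 then 1 else 0)
    (hstep : ∀ {i}, 0 ≤ i → ∀ j n, g₀ i j (n + 1) = axialSum g₁ i j n) :
    𝐱 * 𝐲 * F₀ = 𝐱 * 𝐲 + 𝐭 * ((𝐱 + 𝐲) * (1 + 𝐱 * 𝐲) * F₁ - 𝐲 * ev₀ F₁) := by
  refine ext_coeffTXY fun n i j => ?_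
  cases n with
  | zero =>
    simp [mul_assoc, coeffTXY_zero_X_mul, coeffTXY_X_mul, coeffTXY_T_mul, coeffTXY_C_T,
      coeffTXY_one, hF₀, hinit]
  | succ n =>
    simp only [mul_add, add_mul, mul_sub, map_add, map_sub, mul_assoc, mul_one, coeffTXY_X_mul_succ,
      coeffTXY_X_mul, coeffTXY_T_mul, coeffTXY_C_T, coeffTXY_one, coeffTXY_map_evalZero, hF₀, hF₁,
      Nat.add_one_ne_zero, false_and, if_false, zero_add]
    rcases lt_or_ge i 1 with hi | hi
    · simp only [apply_eq_zero_of_coeffTXY_eq hF₀ (show i - 1 < 0 by omega),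
        apply_eq_zero_of_coeffTXY_eq hF₁ (show i - 1 < 0 by omega),
        apply_eq_zero_of_coeffTXY_eq hF₁ (show i - 1 - 1 < 0 by omega)]
      split_ifs with h0
      · subst h0; ring
      · simp only [apply_eq_zero_of_coeffTXY_eq hF₁ (lt_of_le_of_ne (by omega) h0)]; ring
    · rw [hstep (by omega)]
      simp only [axialSum, show i ≠ 0 by omega, if_false, sub_add_cancel]
      ring

theorem functional_eq_odd (hF₀ : ∀ n i j, coeffTXY n i j F₀ = g₀ i j n)
    (hF₁ : ∀ n i j, coeffTXY n i j F₁ = g₁ i j n)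
    (hinit : ∀ i j, g₁ i j 0 = 0)
    (hstep : ∀ {i}, 0 ≤ i → ∀ j n,
      g₁ i j (n + 1) = axialSum g₀ i j n + diagonalSum g₁ i j n) :
    𝐱 * 𝐲 * F₁ = 𝐭 * ((𝐱 + 𝐲) * (1 + 𝐱 * 𝐲) * F₀ - 𝐲 * ev₀ F₀ +
      (1 + 𝐱 ^ 2) * (1 + 𝐲 ^ 2) * F₁ - (1 + 𝐲 ^ 2) * ev₀ F₁) := by
  refine ext_coeffTXY fun n i j => ?_
  cases n with
  | zero => simp [mul_assoc, coeffTXY_zero_X_mul, coeffTXY_X_mul, coeffTXY_T_mul, hF₁, hinit]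
  | succ n =>
    simp only [mul_add, add_mul, mul_sub, map_add, map_sub, mul_assoc, one_mul, mul_one, pow_two,
      coeffTXY_X_mul_succ, coeffTXY_X_mul, coeffTXY_T_mul, coeffTXY_map_evalZero, hF₀, hF₁]
    rcases lt_or_ge i 1 with hi | hi
    · simp only [apply_eq_zero_of_coeffTXY_eq hF₀ (show i - 1 < 0 by omega),
        apply_eq_zero_of_coeffTXY_eq hF₁ (show i - 1 < 0 by omega),
        apply_eq_zero_of_coeffTXY_eq hF₀ (show i - 1 - 1 < 0 by omega),
        apply_eq_zero_of_coeffTXY_eq hF₁ (show i - 1 - 1 < 0 by omega)]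
      split_ifs with h0
      · subst h0; ring
      · simp only [apply_eq_zero_of_coeffTXY_eq hF₀ (lt_of_le_of_ne (by omega) h0),
          apply_eq_zero_of_coeffTXY_eq hF₁ (lt_of_le_of_ne (by omega) h0)]
        ring
    · rw [hstep (by omega)]
      simp only [axialSum, diagonalSum, show i ≠ 0 by omega, if_false, sub_add_cancel]
      ring

end FunctionalEquations

theorem halfplane_space_inhomogeneous_kernel_equation
    (S0 : Finset (ℤ × ℤ)) (hS0 : S0 = {(1,0), (-1,0), (0,1), (0,-1)})
    (S1 : Finset (ℤ × ℤ))
    (hS1 : S1 = {(1,0), (-1,0), (0,1), (0,-1), (1,1), (1,-1), (-1,1), (-1,-1)})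
    (f : ℤ → ℤ → ℕ → ℚ)
    (hfneg : ∀ i j n, i < 0 → f i j n = 0)
    (hf0 : ∀ i j : ℤ, 0 ≤ i → f i j 0 = if i = 0 ∧ j = 0 then 1 else 0)
    (hfrec : ∀ (i j : ℤ) (n : ℕ), 0 ≤ i →
      f i j (n + 1) = ∑ st ∈ S1,
        if 0 ≤ i - st.1 ∧ st ∈ (if (i - st.1 + (j - st.2)) % 2 = 0 then S0 else S1)
          then f (i - st.1) (j - st.2) n else 0)
    (FF : Fin 2 → PowerSeries (Polynomial (LaurentPolynomial ℚ)))
    (hFF : ∀ (r : Fin 2) (n : ℕ) (i : ℕ) (j : ℤ),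
      (AddMonoidAlgebra.coeff ((PowerSeries.coeff n (FF r)).coeff i)) j =
        if ((i : ℤ) + j) % 2 = ((r : ℕ) : ℤ) then f i j n else 0)
    -- abbreviations: x, y, t as elements of R[[t]], and the "set x = 0" operation
    (x y t : PowerSeries (Polynomial (LaurentPolynomial ℚ)))
    (hx : x = PowerSeries.C Polynomial.X)
    (hy : y = PowerSeries.C (Polynomial.C (LaurentPolynomial.T 1)))
    (ht : t = PowerSeries.X)
    (ev0 : PowerSeries (Polynomial (LaurentPolynomial ℚ)) →+*
           PowerSeries (Polynomial (LaurentPolynomial ℚ)))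
    (hev0 : ev0 = PowerSeries.map
      ((Polynomial.C : LaurentPolynomial ℚ →+* Polynomial (LaurentPolynomial ℚ)).comp
        (Polynomial.evalRingHom (0 : LaurentPolynomial ℚ)))) :
    (x^2 * y^2 - t^2 * (x + y)^2 * (1 + x*y)^2 - t * x * (1 + x^2) * y * (1 + y^2)) * FF 1
      = t * x * y * (x + y) * (1 + x*y)
        - t * x * y^2 * ev0 (FF 0)
        - t * y * (x * (1 + y^2) + t * (x + y) * (1 + x*y)) * ev0 (FF 1) := by
  subst hS0 hS1 hx hy ht hev0
  have hstep : ∀ {i}, 0 ≤ i → ∀ j n,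
      f i j (n + 1) = axialSum f i j n + if (i + j) % 2 = 1 then diagonalSum f i j n else 0 :=
    fun hi j n => (hfrec _ j n hi).trans (sum_kingSteps_eq hfneg hi j n)
  have hF₀ := coeffTXY_eq_of_coeff (paritySlice_of_neg hfneg 0) (hFF 0)
  have hF₁ := coeffTXY_eq_of_coeff (paritySlice_of_neg hfneg 1) (hFF 1)
  have E₀ := functional_eq_even hF₀ hF₁ (paritySlice_zero_zero hfneg hf0)
    (paritySlice_zero_succ hstep)
  have E₁ := functional_eq_odd hF₀ hF₁ (paritySlice_one_zero hfneg hf0)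
    (paritySlice_one_succ hstep)
  set x : PowerSeries ℚ[T;T⁻¹][X] := PowerSeries.C Polynomial.X
  set y : PowerSeries ℚ[T;T⁻¹][X] := PowerSeries.C (Polynomial.C (LaurentPolynomial.T 1))
  linear_combination x * y * E₁ + PowerSeries.X * (x + y) * (1 + x * y) * E₀
end
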